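/- arXiv:2404.01347 — 2 statements merged into one kernel-verified Lean document; each statement's English description precedes it below -/
import Mathlib

section
/- Let DB be a finite uncertain database whose events take values in [0,1], let w : I → ℝ be a weight function with w(i) ≥ 0 for all items i, and let F be a finite set of items. Let α = β ++ ⟨{i}⟩ for a pattern β and item i, and let α' be a nonempty pattern with α ⊑ α' such that every item of α' belongs to items(α) ∪ F. Then WES_DB(α') ≤ expSup^cap_DB(α) · wgt^cap_F(α) = wExpSup^cap_DB(α). In particular WES_DB(α) ≤ wExpSup^cap_DB(α). (Lemma 4.) -/
open scoped Classical

noncomputable section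

variable {I : Type*}

/-- `js` is an occurrence of pattern `α` in uncertain sequence `S`:
a strictly increasing list of 1-based positions `1 ≤ j₁ < ⋯ < jₘ ≤ n`. -/
def IsOcc (S : List (I → ℝ)) (α : List (Finset I)) (js : List ℕ) : Prop :=
  js.length = α.length ∧ List.Pairwise (· < ·) js ∧ ∀ j ∈ js, 1 ≤ j ∧ j ≤ S.length

/-- The probability of the occurrence `js` of pattern `α` in `S`:
`∏ₖ ∏_{i ∈ eₖ} p_{jₖ}(i)`. -/
def occProb (S : List (I → ℝ)) (α : List (Finset I)) (js : List ℕ) : ℝ :=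
  ((α.zip js).map fun ej => ∏ i ∈ ej.1, S.getD (ej.2 - 1) (fun _ => (0 : ℝ)) i).prod

/-- `maxPr_S(α)`: the maximum occurrence probability of `α` in `S`
(`0` if there is no occurrence, since `sSup ∅ = 0` in `ℝ`; `1` for the empty pattern). -/
def maxPr (S : List (I → ℝ)) (α : List (Finset I)) : ℝ :=
  sSup {x : ℝ | ∃ js, IsOcc S α js ∧ occProb S α js = x}

/-- `α ⊑ α'`: there are positions `j₁ < ⋯ < jₘ` in `α'` with `eₖ ⊆ e'_{jₖ}` for all `k`. -/
def IsSubpattern (α α' : List (Finset I)) : Prop :=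
  ∃ β : List (Finset I), List.Forall₂ (· ⊆ ·) α β ∧ β.Sublist α'

/-- Expected support of `α` in a database `DB`. -/
def expSup (DB : List (List (I → ℝ))) (α : List (Finset I)) : ℝ :=
  (DB.map fun S => maxPr S α).sum

/-- `maxPr_DB(α) = max_{S ∈ DB} maxPr_S(α)`, `0` for an empty database. -/
def maxPrDB (DB : List (List (I → ℝ))) (α : List (Finset I)) : ℝ :=
  (DB.map fun S => maxPr S α).foldr max 0

/-- `expSup^cap_DB(β ++ ⟨{i}⟩) = maxPr_DB(β) · Σ_{S ∈ DB} maxPr_S(⟨{i}⟩)`. -/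
def expSupCap (DB : List (List (I → ℝ))) (β : List (Finset I)) (i : I) : ℝ :=
  maxPrDB DB β * expSup DB [{i}]

/-- Support count of item `i`: the number of sequences `S ∈ DB` with `maxPr_S(⟨{i}⟩) > 0`. -/
def supCount (DB : List (List (I → ℝ))) (i : I) : ℕ :=
  (DB.filter fun S => decide (0 < maxPr S [({i} : Finset I)])).length

/-- The set of items occurring in a pattern. -/
def pItems (α : List (Finset I)) : Finset I :=
  α.foldr (· ∪ ·) ∅

/-- The size of a pattern: total number of items counted across events. -/
def pSize (α : List (Finset I)) : ℕ :=
  (α.map Finset.card).sum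

/-- `sWeight(α)`: the sum of the weights of all items of `α` divided by its size. -/
def sWeight (w : I → ℝ) (α : List (Finset I)) : ℝ :=
  (α.map fun e => ∑ i ∈ e, w i).sum / (pSize α : ℝ)

/-- `wgt^cap_F(α)`: the maximum of `w` over `F ∪ items(α)`. -/
def wgtCap (w : I → ℝ) (F : Finset I) (α : List (Finset I)) : ℝ :=
  (F ∪ pItems α).fold max 0 w

/-- Weighted expected support: `WES_DB(α) = expSup_DB(α) · sWeight(α)`. -/
def WES (DB : List (List (I → ℝ))) (w : I → ℝ) (α : List (Finset I)) : ℝ :=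
  expSup DB α * sWeight w α

/-- The SupCalc array `g_{S,α}(m)`: for nonempty `α`, the maximum probability of an
occurrence of `α` in `S` whose last position is `m` (`0` if none, in particular for `m = 0`);
for the empty pattern it is `1`. -/
def gArr (S : List (I → ℝ)) (α : List (Finset I)) (m : ℕ) : ℝ :=
  if α = [] then 1
  else sSup {x : ℝ | ∃ js, IsOcc S α js ∧ js.getLast? = some m ∧ occProb S α js = x}
section Aux

variable {S : List (I → ℝ)}

lemma getD_bounds (hS : ∀ p ∈ S, ∀ i : I, 0 ≤ p i ∧ p i ≤ 1) (n : ℕ) (i : I) :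
    0 ≤ S.getD n (fun _ => (0 : ℝ)) i ∧ S.getD n (fun _ => (0 : ℝ)) i ≤ 1 := by
  by_cases h : n < S.length
  · rw [List.getD_eq_getElem _ _ h]
    exact hS _ (List.getElem_mem h) i
  · rw [List.getD_eq_default _ _ (not_lt.1 h)]
    exact ⟨le_refl 0, zero_le_one⟩

lemma factor_bounds (hS : ∀ p ∈ S, ∀ i : I, 0 ≤ p i ∧ p i ≤ 1) (e : Finset I) (j : ℕ) :
    0 ≤ (∏ i ∈ e, S.getD (j - 1) (fun _ => (0 : ℝ)) i) ∧
      (∏ i ∈ e, S.getD (j - 1) (fun _ => (0 : ℝ)) i) ≤ 1 := by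
  constructor
  · exact Finset.prod_nonneg fun i _ => (getD_bounds hS _ i).1
  · exact Finset.prod_le_one (fun i _ => (getD_bounds hS _ i).1)
      (fun i _ => (getD_bounds hS _ i).2)

lemma prod_list_bounds {l : List ℝ} (h : ∀ x ∈ l, 0 ≤ x ∧ x ≤ 1) :
    0 ≤ l.prod ∧ l.prod ≤ 1 := by
  induction l with
  | nil => simp
  | cons a t ih =>
    obtain ⟨ht0, ht1⟩ := ih fun x hx => h x (List.mem_cons_of_mem _ hx)
    obtain ⟨ha0, ha1⟩ := h a (List.mem_cons_self)
    refine ⟨by simpa using mul_nonneg ha0 ht0, ?_⟩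
    simpa using mul_le_one₀ ha1 ht0 ht1

lemma occProb_bounds (hS : ∀ p ∈ S, ∀ i : I, 0 ≤ p i ∧ p i ≤ 1)
    (α : List (Finset I)) (js : List ℕ) :
    0 ≤ occProb S α js ∧ occProb S α js ≤ 1 := by
  apply prod_list_bounds
  intro x hx
  simp only [List.mem_map] at hx
  obtain ⟨ej, _, rfl⟩ := hx
  exact factor_bounds hS ej.1 ej.2

lemma maxPr_bounds (hS : ∀ p ∈ S, ∀ i : I, 0 ≤ p i ∧ p i ≤ 1) (α : List (Finset I)) :
    0 ≤ maxPr S α ∧ maxPr S α ≤ 1 := by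
  constructor
  · exact Real.sSup_nonneg fun x ⟨js, _, h⟩ => h ▸ (occProb_bounds hS α js).1
  · exact Real.sSup_le (fun x ⟨js, _, h⟩ => h ▸ (occProb_bounds hS α js).2) zero_le_one

lemma le_maxPr (hS : ∀ p ∈ S, ∀ i : I, 0 ≤ p i ∧ p i ≤ 1)
    {α : List (Finset I)} {js : List ℕ} (h : IsOcc S α js) :
    occProb S α js ≤ maxPr S α := by
  apply le_csSup
  · exact ⟨1, fun x ⟨js', _, hx⟩ => hx ▸ (occProb_bounds hS α js').2⟩
  · exact ⟨js, h, rfl⟩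

lemma maxPr_le {α : List (Finset I)} {b : ℝ} (hb : 0 ≤ b)
    (h : ∀ js, IsOcc S α js → occProb S α js ≤ b) : maxPr S α ≤ b :=
  Real.sSup_le (fun x ⟨js, hjs, hx⟩ => hx ▸ h js hjs) hb

/-- Extraction of a sub-occurrence along a sublist of patterns. -/
lemma exists_sub_occ {γ α' : List (Finset I)} (hs : γ.Sublist α') :
    ∀ js : List ℕ, js.length = α'.length →
      ∃ js', js'.Sublist js ∧ js'.length = γ.length ∧
        (γ.zip js').Sublist (α'.zip js) := by
  induction hs with
  | slnil => intro js h; exact ⟨[], by simp_all [List.length_eq_zero_iff.1 h]⟩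
  | cons a hs ih =>
    intro js h
    cases js with
    | nil => simp at h
    | cons j js₀ =>
      obtain ⟨js', h1, h2, h3⟩ := ih js₀ (by simpa using h)
      exact ⟨js', h1.trans (List.sublist_cons_self _ _), h2, h3.trans (List.sublist_cons_self _ _)⟩
  | cons_cons a hs ih =>
    intro js h
    cases js with
    | nil => simp at h
    | cons j js₀ =>
      obtain ⟨js', h1, h2, h3⟩ := ih js₀ (by simpa using h)
      exact ⟨j :: js', h1.cons₂ _, by simpa using h2, by simpa using h3.cons₂ (a, j)⟩

lemma prod_le_of_sublist {l l' : List ℝ} (h : l'.Sublist l)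
    (hl : ∀ x ∈ l, 0 ≤ x ∧ x ≤ 1) : l.prod ≤ l'.prod := by
  induction h with
  | slnil => exact le_refl _
  | cons a h ih =>
    rename_i l₁ l₂
    have hl₂ : ∀ x ∈ l₂, 0 ≤ x ∧ x ≤ 1 := fun x hx => hl x (List.mem_cons_of_mem _ hx)
    have := ih hl₂
    obtain ⟨ha0, ha1⟩ := hl a (List.mem_cons_self)
    calc (a :: l₂).prod = a * l₂.prod := by simp
      _ ≤ 1 * l₂.prod := mul_le_mul_of_nonneg_right ha1 (prod_list_bounds hl₂).1
      _ = l₂.prod := one_mul _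
      _ ≤ l₁.prod := this
  | cons_cons a h ih =>
    rename_i l₁ l₂
    have hl₂ : ∀ x ∈ l₂, 0 ≤ x ∧ x ≤ 1 := fun x hx => hl x (List.mem_cons_of_mem _ hx)
    simp only [List.prod_cons]
    exact mul_le_mul_of_nonneg_left (ih hl₂) (le_trans (hl a (List.mem_cons_self)).1
      (le_refl _))

lemma finset_prod_subset_le {e e' : Finset I} (h : e ⊆ e') {v : I → ℝ}
    (hv : ∀ i, 0 ≤ v i ∧ v i ≤ 1) : (∏ i ∈ e', v i) ≤ ∏ i ∈ e, v i := by
  rw [← Finset.prod_sdiff h]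
  have h1 : (∏ i ∈ e' \ e, v i) ≤ 1 :=
    Finset.prod_le_one (fun i _ => (hv i).1) (fun i _ => (hv i).2)
  have h0 : 0 ≤ ∏ i ∈ e, v i := Finset.prod_nonneg fun i _ => (hv i).1
  calc (∏ i ∈ e' \ e, v i) * ∏ i ∈ e, v i ≤ 1 * ∏ i ∈ e, v i :=
        mul_le_mul_of_nonneg_right h1 h0
    _ = _ := one_mul _

lemma occProb_forall₂_le (hS : ∀ p ∈ S, ∀ i : I, 0 ≤ p i ∧ p i ≤ 1)
    {α γ : List (Finset I)} (hf : List.Forall₂ (· ⊆ ·) α γ) :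
    ∀ js : List ℕ, occProb S γ js ≤ occProb S α js := by
  induction hf with
  | nil => intro js; simp [occProb]
  | cons he hf ih =>
    rename_i e e' α₀ γ₀
    intro js
    cases js with
    | nil => simp [occProb]
    | cons j js₀ =>
      simp only [occProb, List.zip_cons_cons, List.map_cons, List.prod_cons]
      have h1 := finset_prod_subset_le he
        (v := fun i => S.getD (j - 1) (fun _ => (0:ℝ)) i) (fun i => getD_bounds hS _ i)
      have h2 := ih js₀
      have h0γ : 0 ≤ occProb S γ₀ js₀ := (occProb_bounds hS _ _).1
      have h0e : 0 ≤ ∏ i ∈ e, S.getD (j - 1) (fun _ => (0:ℝ)) i :=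
        (factor_bounds hS _ _).1
      exact mul_le_mul h1 h2 h0γ h0e

lemma maxPr_antitone (hS : ∀ p ∈ S, ∀ i : I, 0 ≤ p i ∧ p i ≤ 1)
    {α α' : List (Finset I)} (h : IsSubpattern α α') :
    maxPr S α' ≤ maxPr S α := by
  obtain ⟨γ, hf, hs⟩ := h
  apply maxPr_le (maxPr_bounds hS α).1
  rintro js ⟨hlen, hsort, hbd⟩
  obtain ⟨js', hsub', hlen', hzip⟩ := exists_sub_occ hs js hlen
  have hocc' : IsOcc S α js' :=
    ⟨hlen'.trans hf.length_eq.symm, hsort.sublist hsub',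
      fun j hj => hbd j (hsub'.subset hj)⟩
  have step1 : occProb S α' js ≤ occProb S γ js' := by
    apply prod_le_of_sublist (hzip.map _)
    intro x hx
    simp only [List.mem_map] at hx
    obtain ⟨ej, _, rfl⟩ := hx
    exact factor_bounds hS ej.1 ej.2
  exact step1.trans ((occProb_forall₂_le hS hf js').trans (le_maxPr hS hocc'))

lemma maxPr_append_singleton_le (hS : ∀ p ∈ S, ∀ i : I, 0 ≤ p i ∧ p i ≤ 1)
    (β : List (Finset I)) (i : I) :
    maxPr S (β ++ [{i}]) ≤ maxPr S β * maxPr S [({i} : Finset I)] := by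
  apply maxPr_le (mul_nonneg (maxPr_bounds hS β).1 (maxPr_bounds hS _).1)
  rintro js ⟨hlen, hsort, hbd⟩
  have hjs_ne : js ≠ [] := by
    intro h; rw [h] at hlen; simp at hlen
  obtain ⟨js₁, m, rfl⟩ : ∃ js₁ m, js = js₁ ++ [m] :=
    ⟨js.dropLast, js.getLast hjs_ne, (List.dropLast_append_getLast hjs_ne).symm⟩
  have hlen₁ : js₁.length = β.length := by simpa using hlen
  have hocc₁ : IsOcc S β js₁ :=
    ⟨hlen₁, hsort.sublist (List.sublist_append_left _ _),
      fun j hj => hbd j (List.mem_append_left _ hj)⟩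
  have hoccm : IsOcc S [({i} : Finset I)] [m] :=
    ⟨rfl, List.pairwise_singleton _ m, fun j hj => by
      have hjm : j = m := by simpa using hj
      subst hjm
      exact hbd j (List.mem_append_right _ (List.mem_singleton_self j))⟩
  have hsplit : occProb S (β ++ [{i}]) (js₁ ++ [m]) =
      occProb S β js₁ * occProb S [({i} : Finset I)] [m] := by
    simp [occProb, List.zip_append hlen₁.symm]
  rw [hsplit]
  exact mul_le_mul (le_maxPr hS hocc₁) (le_maxPr hS hoccm)
    (occProb_bounds hS _ _).1 (maxPr_bounds hS β).1

lemma le_foldr_max {l : List ℝ} {a : ℝ} (h : a ∈ l) : a ≤ l.foldr max 0 := by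
  induction l with
  | nil => simp at h
  | cons b t ih =>
    rcases List.mem_cons.1 h with rfl | h
    · exact le_max_left _ _
    · exact (ih h).trans (le_max_right _ _)

lemma foldr_max_nonneg (l : List ℝ) : 0 ≤ l.foldr max 0 := by
  induction l with
  | nil => simp
  | cons b t ih => exact ih.trans (le_max_right _ _)

lemma mem_pItems {α : List (Finset I)} {e : Finset I} {i : I}
    (he : e ∈ α) (hi : i ∈ e) : i ∈ pItems α := by
  induction α with
  | nil => simp at he
  | cons a t ih =>
    rcases List.mem_cons.1 he with rfl | he
    · exact Finset.mem_union_left _ hi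
    · exact Finset.mem_union_right _ (ih he)

lemma wgtCap_nonneg (w : I → ℝ) (F : Finset I) (α : List (Finset I)) :
    0 ≤ wgtCap w F α :=
  (Finset.le_fold_max 0).2 (Or.inl le_rfl)

lemma w_le_wgtCap {w : I → ℝ} {F : Finset I} {α : List (Finset I)} {i : I}
    (h : i ∈ F ∪ pItems α) : w i ≤ wgtCap w F α :=
  (Finset.le_fold_max _).2 (Or.inr ⟨i, h, le_rfl⟩)

end Aux

lemma sum_le_size_mul {w : I → ℝ} {C : ℝ} (hC : 0 ≤ C) :
    ∀ l : List (Finset I), (∀ e ∈ l, ∀ j ∈ e, w j ≤ C) →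
      (l.map fun e => ∑ i ∈ e, w i).sum ≤ (pSize l : ℝ) * C := by
  intro l
  induction l with
  | nil => intro _; simp [pSize]
  | cons e t ih =>
    intro h
    have h1 : (∑ i ∈ e, w i) ≤ (e.card : ℝ) * C := by
      have := Finset.sum_le_card_nsmul e w C (fun j hj => h e (List.mem_cons_self) j hj)
      simpa [nsmul_eq_mul] using this
    have h2 := ih fun e' he' => h e' (List.mem_cons_of_mem _ he')
    have hps : (pSize (e :: t) : ℝ) = (e.card : ℝ) + (pSize t : ℝ) := by
      simp [pSize]
    simp only [List.map_cons, List.sum_cons, hps]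
    linarith

lemma sum_map_le {A : Type*} (l : List A) (f g : A → ℝ) (h : ∀ x ∈ l, f x ≤ g x) :
    (l.map f).sum ≤ (l.map g).sum := by
  induction l with
  | nil => simp
  | cons a t ih =>
    simp only [List.map_cons, List.sum_cons]
    exact add_le_add (h a (List.mem_cons_self)) (ih fun x hx => h x (List.mem_cons_of_mem _ hx))

lemma sum_map_mul_left' {A : Type*} (l : List A) (c : ℝ) (f : A → ℝ) :
    (l.map fun x => c * f x).sum = c * (l.map f).sum := by
  induction l with
  | nil => simp
  | cons a t ih => simp [List.map_cons, List.sum_cons, ih]; ring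

lemma WES_le_cap_aux
    (DB : List (List (I → ℝ)))
    (hDB : ∀ S ∈ DB, ∀ p ∈ S, ∀ i : I, 0 ≤ p i ∧ p i ≤ 1)
    (w : I → ℝ) (hw : ∀ i : I, 0 ≤ w i) (F : Finset I)
    (β : List (Finset I)) (i : I)
    (α' : List (Finset I))
    (hsub : IsSubpattern (β ++ [{i}]) α')
    (hitems : pItems α' ⊆ pItems (β ++ [{i}]) ∪ F) :
    WES DB w α' ≤ expSupCap DB β i * wgtCap w F (β ++ [{i}]) := by
  set C := wgtCap w F (β ++ [{i}]) with hCdef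
  have hC : 0 ≤ C := wgtCap_nonneg w F _
  -- sWeight bound
  have hwle : ∀ e ∈ α', ∀ j ∈ e, w j ≤ C := by
    intro e he j hj
    apply w_le_wgtCap
    have := hitems (mem_pItems he hj)
    rcases Finset.mem_union.1 this with h | h
    · exact Finset.mem_union_right _ h
    · exact Finset.mem_union_left _ h
  have hsw_le : sWeight w α' ≤ C := by
    rw [sWeight]
    rcases Nat.eq_zero_or_pos (pSize α') with h0 | hpos
    · simp [h0, hC]
    · rw [div_le_iff₀ (by exact_mod_cast hpos)]
      have := sum_le_size_mul hC α' hwle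
      linarith
  have hsw_0 : 0 ≤ sWeight w α' := by
    apply div_nonneg _ (Nat.cast_nonneg _)
    apply List.sum_nonneg
    intro x hx
    simp only [List.mem_map] at hx
    obtain ⟨e, _, rfl⟩ := hx
    exact Finset.sum_nonneg fun j _ => hw j
  -- expSup bound
  have hexp_le : expSup DB α' ≤ expSupCap DB β i := by
    rw [expSup, expSupCap, expSup, ← sum_map_mul_left']
    apply sum_map_le
    intro S hS
    have hSb := hDB S hS
    have h1 : maxPr S α' ≤ maxPr S (β ++ [{i}]) := maxPr_antitone hSb hsub
    have h2 := maxPr_append_singleton_le hSb β i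
    have h3 : maxPr S β ≤ maxPrDB DB β := by
      apply le_foldr_max
      exact List.mem_map.2 ⟨S, hS, rfl⟩
    calc maxPr S α' ≤ maxPr S β * maxPr S [({i} : Finset I)] := h1.trans h2
      _ ≤ maxPrDB DB β * maxPr S [({i} : Finset I)] :=
        mul_le_mul_of_nonneg_right h3 (maxPr_bounds hSb _).1
  have hcap_0 : 0 ≤ expSupCap DB β i := by
    apply mul_nonneg (foldr_max_nonneg _)
    apply List.sum_nonneg
    intro x hx
    simp only [List.mem_map] at hx
    obtain ⟨S, hS, rfl⟩ := hx
    exact (maxPr_bounds (hDB S hS) _).1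
  exact mul_le_mul hexp_le hsw_le hsw_0 hcap_0
/-- Lemma 4: for `α = β ++ ⟨{i}⟩`, every nonempty supersequence
`α'` of `α` whose items lie in `items(α) ∪ F` satisfies
`WES_DB(α') ≤ expSup^cap_DB(α) · wgt^cap_F(α) = wExpSup^cap_DB(α)`;
in particular `WES_DB(α) ≤ wExpSup^cap_DB(α)`. -/
theorem WES_le_wExpSupCap
    (DB : List (List (I → ℝ)))
    (hDB : ∀ S ∈ DB, ∀ p ∈ S, ∀ i : I, 0 ≤ p i ∧ p i ≤ 1)
    (w : I → ℝ) (hw : ∀ i : I, 0 ≤ w i) (F : Finset I)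
    (β : List (Finset I)) (i : I)
    (α' : List (Finset I)) (hne : α' ≠ [])
    (hsub : IsSubpattern (β ++ [{i}]) α')
    (hitems : pItems α' ⊆ pItems (β ++ [{i}]) ∪ F) :
    WES DB w α' ≤ expSupCap DB β i * wgtCap w F (β ++ [{i}]) ∧
      WES DB w (β ++ [{i}]) ≤ expSupCap DB β i * wgtCap w F (β ++ [{i}]) := by
  constructor
  · exact WES_le_cap_aux DB hDB w hw F β i α' hsub hitems
  · exact WES_le_cap_aux DB hDB w hw F β i (β ++ [{i}])
      ⟨β ++ [{i}], List.forall₂_same.2 (fun x _ => subset_rfl), List.Sublist.refl _⟩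
      Finset.subset_union_left
end
end

section
/- Correctness of the SupCalc update for s-extensions: let S = ⟨p₁, …, pₙ⟩ be an uncertain sequence whose events take nonnegative values, let α be any pattern and i an item. Then for every position m with 1 ≤ m ≤ n, g_{S, α ++ ⟨{i}⟩}(m) = p_m(i) · max_{0 ≤ k < m} g_{S, α}(k). -/
open scoped Classical

noncomputable section

variable {I : Type*}

section Aux

variable {I : Type*}

private lemma getD_nonneg' (S : List (I → ℝ)) (hS : ∀ p ∈ S, ∀ i : I, 0 ≤ p i)
    (j : ℕ) (i : I) : 0 ≤ S.getD j (fun _ => (0 : ℝ)) i := by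
  rcases lt_or_ge j S.length with h | h
  · rw [List.getD_eq_getElem _ _ h]
    exact hS _ (List.getElem_mem h) i
  · rw [List.getD_eq_default _ _ h]

private lemma occProb_nonneg' (S : List (I → ℝ)) (hS : ∀ p ∈ S, ∀ i : I, 0 ≤ p i)
    (α : List (Finset I)) (js : List ℕ) : 0 ≤ occProb S α js := by
  apply List.prod_nonneg
  intro x hx
  simp only [List.mem_map] at hx
  obtain ⟨ej, -, rfl⟩ := hx
  exact Finset.prod_nonneg fun i' _ => getD_nonneg' S hS _ i'

private lemma le_of_mem_sorted_getLast? {l : List ℕ} (hl : l.Pairwise (· < ·)) {a b : ℕ}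
    (ha : a ∈ l) (hb : l.getLast? = some b) : a ≤ b := by
  have hne : l ≠ [] := by rintro rfl; simp at ha
  rw [List.getLast?_eq_getLast hne] at hb
  have hb' : b ∈ l := by rw [Option.some_inj] at hb; exact hb ▸ List.getLast_mem hne
  rcases eq_or_ne a b with rfl | hab
  · exact le_rfl
  · -- a ≠ b, both in l; show a < b using that b is the last element
    rw [Option.some_inj] at hb
    subst hb
    -- a ∈ l.dropLast ++ [getLast]
    have := List.dropLast_append_getLast hne
    rw [← this] at ha
    rcases List.mem_append.1 ha with h1 | h1
    · have hpw : l.Pairwise (· < ·) := hl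
      rw [← this, List.pairwise_append] at hpw
      exact le_of_lt (hpw.2.2 a h1 _ (List.mem_singleton_self _))
    · simp only [List.mem_singleton] at h1; exact absurd h1 hab
    
private lemma isOcc_sublist_range' {S : List (I → ℝ)} {α : List (Finset I)} {js : List ℕ}
    (h : IsOcc S α js) : js.Sublist (List.range' 1 S.length) := by
  obtain ⟨-, hsort, hmem⟩ := h
  haveI : IsAntisymm ℕ (· < ·) := IsAsymm.isAntisymm _
  have hsort' : List.Pairwise (· < ·) (List.range' 1 S.length) :=
    List.pairwise_lt_range' (s := 1) (n := S.length)
  refine List.sublist_of_subperm_of_pairwise ?_ hsort hsort'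
  refine (hsort.nodup).subperm ?_
  intro j hj
  obtain ⟨h1, h2⟩ := hmem j hj
  rw [List.mem_range']
  exact ⟨j - 1, by omega, by omega⟩

private lemma occSet_finite (S : List (I → ℝ)) (α : List (Finset I)) (P : List ℕ → Prop) :
    Set.Finite {x : ℝ | ∃ js, IsOcc S α js ∧ P js ∧ occProb S α js = x} := by
  have hsub : {x : ℝ | ∃ js, IsOcc S α js ∧ P js ∧ occProb S α js = x}
      ⊆ (occProb S α) '' {js | js ∈ (List.range' 1 S.length).sublists} := by
    rintro x ⟨js, hocc, -, rfl⟩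
    exact ⟨js, by simpa [List.mem_sublists] using isOcc_sublist_range' hocc, rfl⟩
  exact (((List.range' 1 S.length).sublists.finite_toSet).image _).subset hsub

private lemma sSup_mul_image {p : ℝ} (hp : 0 ≤ p) {U : Set ℝ} (hU : U.Finite)
    (hUn : ∀ x ∈ U, 0 ≤ x) :
    sSup ((fun x => p * x) '' U) = p * sSup U := by
  rcases U.eq_empty_or_nonempty with rfl | hne
  · simp [Real.sSup_empty]
  · have h1 : sSup U ∈ U := hne.csSup_mem hU
    apply le_antisymm
    · apply Real.sSup_le
      · rintro x ⟨y, hy, rfl⟩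
        exact mul_le_mul_of_nonneg_left (le_csSup hU.bddAbove hy) hp
      · exact mul_nonneg hp (hUn _ h1)
    · exact le_csSup (hU.image _).bddAbove ⟨_, h1, rfl⟩

end Aux

/-- correctness of the SupCalc update for s-extensions:
`g_{S, α ++ ⟨{i}⟩}(m) = p_m(i) · max_{0 ≤ k < m} g_{S,α}(k)` for `1 ≤ m ≤ n`. -/
theorem gArr_sExtension
    (S : List (I → ℝ)) (hS : ∀ p ∈ S, ∀ i : I, 0 ≤ p i)
    (α : List (Finset I)) (i : I) (m : ℕ) (hm1 : 1 ≤ m) (hm2 : m ≤ S.length) :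
    gArr S (α ++ [{i}]) m =
      S.getD (m - 1) (fun _ => (0 : ℝ)) i *
        (Finset.range m).sup' (Finset.nonempty_range_iff.mpr (by omega)) (gArr S α) := by
  classical
  set p : ℝ := S.getD (m - 1) (fun _ => (0 : ℝ)) i with hp_def
  have hp : 0 ≤ p := getD_nonneg' S hS _ i
  -- occProb of an appended occurrence splits
  have hsplit : ∀ js : List ℕ, js.length = α.length →
      occProb S (α ++ [{i}]) (js ++ [m]) = p * occProb S α js := by
    intro js hlen
    unfold occProb
    rw [List.zip_append hlen.symm, List.map_append, List.prod_append]
    simp only [List.zip_cons_cons, List.zip_nil_left, List.zip_nil_right, List.map_cons,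
      List.map_nil, List.prod_cons, List.prod_nil, mul_one, Finset.prod_singleton]
    rw [mul_comm, ← hp_def]
  by_cases hα : α = []
  · subst hα
    have hset : {x : ℝ | ∃ js, IsOcc S ([] ++ [({i} : Finset I)]) js ∧
        js.getLast? = some m ∧ occProb S ([] ++ [{i}]) js = x} = {p} := by
      ext x
      simp only [Set.mem_setOf_eq, Set.mem_singleton_iff]
      constructor
      · rintro ⟨js, ⟨hlen, -, -⟩, hlast, rfl⟩
        obtain ⟨j, rfl⟩ : ∃ j, js = [j] := by
          match js, hlen with
          | [j], _ => exact ⟨j, rfl⟩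
        simp only [List.getLast?_singleton, Option.some_inj] at hlast
        subst hlast
        unfold occProb
        simp only [List.nil_append, List.zip_cons_cons, List.zip_nil_left, List.map_cons,
          List.map_nil, List.prod_cons, List.prod_nil, mul_one, Finset.prod_singleton]
        exact hp_def.symm
      · rintro rfl
        refine ⟨[m], ⟨rfl, List.pairwise_singleton _ m, ?_⟩, rfl, ?_⟩
        · intro j hj; simp only [List.mem_singleton] at hj; omega
        · unfold occProb
          simp only [List.nil_append, List.zip_cons_cons, List.zip_nil_left, List.map_cons,
            List.map_nil, List.prod_cons, List.prod_nil, mul_one, Finset.prod_singleton]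
          exact hp_def.symm
    have hL : gArr S ([] ++ [({i} : Finset I)]) m = p := by
      rw [gArr, if_neg (by simp), hset, csSup_singleton]
    rw [hL]
    have hR : (Finset.range m).sup' (Finset.nonempty_range_iff.mpr (by omega))
        (gArr S ([] : List (Finset I))) = 1 := by
      have : ∀ k ∈ Finset.range m, gArr S ([] : List (Finset I)) k = 1 := by
        intro k _; rw [gArr, if_pos rfl]
      rw [Finset.sup'_congr _ rfl this, Finset.sup'_const]
    rw [hR, mul_one]
  · -- α nonempty
    set A : ℕ → Set ℝ := fun k => {x : ℝ | ∃ js, IsOcc S α js ∧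
        js.getLast? = some k ∧ occProb S α js = x} with hA_def
    have hAfin : ∀ k, (A k).Finite := fun k => occSet_finite S α _
    have hAnn : ∀ k, ∀ x ∈ A k, 0 ≤ x := by
      rintro k x ⟨js, -, -, rfl⟩; exact occProb_nonneg' S hS α js
    set U : Set ℝ := {x : ℝ | ∃ js, IsOcc S α js ∧
        (∃ k < m, js.getLast? = some k) ∧ occProb S α js = x} with hU_def
    have hUfin : U.Finite := occSet_finite S α _
    have hUnn : ∀ x ∈ U, 0 ≤ x := by
      rintro x ⟨js, -, -, rfl⟩; exact occProb_nonneg' S hS α js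
    -- T = p * U
    have hT : {x : ℝ | ∃ js, IsOcc S (α ++ [{i}]) js ∧
        js.getLast? = some m ∧ occProb S (α ++ [{i}]) js = x}
        = (fun x => p * x) '' U := by
      ext x
      simp only [Set.mem_setOf_eq, Set.mem_image]
      constructor
      · rintro ⟨js, ⟨hlen, hsort, hmem⟩, hlast, rfl⟩
        have hne : js ≠ [] := by
          intro h; rw [h] at hlen; simp at hlen
        obtain ⟨js', hjs⟩ : ∃ js', js = js' ++ [m] := by
          refine ⟨js.dropLast, ?_⟩
          have h1 := List.dropLast_append_getLast hne
          rw [List.getLast?_eq_getLast hne, Option.some_inj] at hlast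
          rw [hlast] at h1
          exact h1.symm
        subst hjs
        have hlen' : js'.length = α.length := by
          rw [List.length_append, List.length_append] at hlen
          simpa using hlen
        have hsortU : js'.Pairwise (· < ·) ∧ ∀ a ∈ js', a < m := by
          rw [List.pairwise_append] at hsort
          exact ⟨hsort.1, fun a ha => hsort.2.2 a ha m (List.mem_singleton_self m)⟩
        have hocc' : IsOcc S α js' := by
          refine ⟨hlen', hsortU.1, fun j hj => hmem j (List.mem_append_left _ hj)⟩
        have hne' : js' ≠ [] := by
          intro h
          subst h
          exact hα (List.length_eq_zero_iff.mp (by simpa using hlen'.symm))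
        refine ⟨occProb S α js', ⟨js', hocc', ⟨js'.getLast hne', ?_,
          List.getLast?_eq_getLast hne'⟩, rfl⟩, ?_⟩
        · exact hsortU.2 _ (List.getLast_mem hne')
        · exact (hsplit js' hlen').symm
      · rintro ⟨y, ⟨js, hocc, ⟨k, hkm, hlast⟩, rfl⟩, rfl⟩
        obtain ⟨hlen, hsort, hmem⟩ := hocc
        refine ⟨js ++ [m], ⟨?_, ?_, ?_⟩, ?_, ?_⟩
        · simp [hlen]
        · rw [List.pairwise_append]
          refine ⟨hsort, List.pairwise_singleton _ _, ?_⟩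
          intro a ha b hb
          simp only [List.mem_singleton] at hb
          subst hb
          exact lt_of_le_of_lt (le_of_mem_sorted_getLast? hsort ha hlast) hkm
        · intro j hj
          rcases List.mem_append.1 hj with h | h
          · exact hmem j h
          · simp only [List.mem_singleton] at h; omega
        · exact List.getLast?_concat
        · exact hsplit js hlen
    -- Now compute
    have hL : gArr S (α ++ [{i}]) m = p * sSup U := by
      rw [gArr, if_neg (by simp), hT]
      exact sSup_mul_image hp hUfin hUnn
    rw [hL]
    congr 1
    -- sSup U = sup' over range m of gArr S α
    have hgA : ∀ k, gArr S α k = sSup (A k) := fun k => by rw [gArr, if_neg hα]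
    have hAU : ∀ k, k < m → A k ⊆ U := by
      rintro k hk x ⟨js, hocc, hlast, rfl⟩
      exact ⟨js, hocc, ⟨k, hk, hlast⟩, rfl⟩
    have h0m : (0 : ℕ) ∈ Finset.range m := Finset.mem_range.mpr (by omega)
    apply le_antisymm
    · apply Real.sSup_le
      · rintro x ⟨js, hocc, ⟨k, hkm, hlast⟩, rfl⟩
        have h1 : occProb S α js ≤ sSup (A k) :=
          le_csSup (hAfin k).bddAbove ⟨js, hocc, hlast, rfl⟩
        have h2 : gArr S α k ≤ (Finset.range m).sup'
            (Finset.nonempty_range_iff.mpr (by omega)) (gArr S α) :=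
          Finset.le_sup' _ (Finset.mem_range.mpr hkm)
        rw [hgA k] at h2
        exact le_trans h1 h2
      · refine le_trans ?_ (Finset.le_sup' _ h0m)
        rw [hgA 0]
        exact Real.sSup_nonneg (hAnn 0)
    · apply Finset.sup'_le
      intro k hk
      rw [hgA k]
      rcases (A k).eq_empty_or_nonempty with he | hne
      · rw [he, Real.sSup_empty]
        exact Real.sSup_nonneg hUnn
      · have h1 : sSup (A k) ∈ A k := hne.csSup_mem (hAfin k)
        exact le_csSup hUfin.bddAbove (hAU k (Finset.mem_range.mp hk) h1)
end
end
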